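/- arXiv:2405.03102 — 2 statements merged into one kernel-verified Lean document; each statement's English description precedes it below -/
import Mathlib

section
/- (Proposition 3.1.) Let T > 0, let Π : [0,T] → ℝ^{3×3} and Δ : [0,T] → ℝ³ be continuous, and let Θ : [0,T] → ℝ^{3×3} be the fundamental solution matrix, i.e. Θ'(t) = Π(t) Θ(t) for all t ∈ [0,T] and Θ(0) = I. Assume that the (3,3) entry of Θ(T) is nonzero. Then for every pair of initial values ξ, ξ₀ ∈ ℝ there exists one and only one differentiable function v = (v₁, v₂, v₃) : [0,T] → ℝ³ satisfying v'(t) = Π(t) v(t) + Δ(t) for all t ∈ [0,T], together with the mixed boundary conditions v₁(0) = ξ, v₂(0) = ξ₀ and v₃(T) = 0. -/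
/-! Solutions of `v' = M v + Δ` on `[0, T]` are exactly the curves `t ↦ Θ t *ᵥ z + p t`, where
`z = v 0` and `p t = Θ t *ᵥ ∫₀ᵗ (Θ s)⁻¹ *ᵥ Δ s` is the variation-of-constants solution (`Θ t` is
invertible because a kernel vector would give a solution of the homogeneous equation vanishing at
`t`, hence at `0`). The conditions at `0` fix `z 0` and `z 1`, and `v₃(T) = 0` is then an affine
equation in `z 2` with leading coefficient `Θ T 2 2 ≠ 0`. -/

open Matrix Set Topology

section LinearODE

variable {ι : Type*} [Fintype ι]

theorem hasDerivWithinAt_matrix_mulVec {κ : Type*} {A : ℝ → Matrix κ ι ℝ} {A' : Matrix κ ι ℝ}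
    {c : ℝ → ι → ℝ} {c' : ι → ℝ} {s : Set ℝ} {t : ℝ}
    (hA : ∀ i j, HasDerivWithinAt (fun τ => A τ i j) (A' i j) s t)
    (hc : HasDerivWithinAt c c' s t) :
    HasDerivWithinAt (fun τ => A τ *ᵥ c τ) (A' *ᵥ c t + A t *ᵥ c') s t := by
  refine hasDerivWithinAt_pi.2 fun i => ?_
  simp only [Pi.add_apply, mulVec, dotProduct, ← Finset.sum_add_distrib]
  exact HasDerivWithinAt.fun_sum fun j _ => (hA i j).mul (hasDerivWithinAt_pi.1 hc j)

attribute [local instance] Matrix.linftyOpNormedAddCommGroup in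
theorem exists_lipschitzWith_mulVec {M : ℝ → Matrix ι ι ℝ} {s : Set ℝ} (hs : IsCompact s)
    (hM : ContinuousOn M s) : ∃ K, ∀ t ∈ s, LipschitzWith K (M t *ᵥ ·) := by
  obtain ⟨C, hC⟩ := hs.exists_bound_of_continuousOn hM
  refine ⟨Real.toNNReal C, fun t ht => LipschitzWith.of_dist_le_mul fun x y => ?_⟩
  rw [dist_eq_norm, dist_eq_norm, ← mulVec_sub]
  exact (linfty_opNorm_mulVec _ _).trans
    (mul_le_mul_of_nonneg_right ((hC t ht).trans (Real.le_coe_toNNReal C)) (norm_nonneg _))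

variable {M : ℝ → Matrix ι ι ℝ} {a b : ℝ}

def IsMatrixSolutionOn (M Θ : ℝ → Matrix ι ι ℝ) (s : Set ℝ) : Prop :=
  ∀ t ∈ s, ∀ i j, HasDerivWithinAt (fun τ => Θ τ i j) ((M t * Θ t) i j) s t

theorem eqOn_of_hasDerivWithinAt_mulVec (hM : ContinuousOn M (Icc a b))
    {f g : ℝ → ι → ℝ} {t₀ : ℝ}
    (hf : ∀ t ∈ Icc a b, HasDerivWithinAt f (M t *ᵥ f t) (Icc a b) t)
    (hg : ∀ t ∈ Icc a b, HasDerivWithinAt g (M t *ᵥ g t) (Icc a b) t)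
    (ht₀ : t₀ ∈ Icc a b) (hfg : f t₀ = g t₀) : EqOn f g (Icc a b) := by
  obtain ⟨K, hK⟩ := exists_lipschitzWith_mulVec isCompact_Icc hM
  have hlip : ∀ t ∈ Icc a b, LipschitzOnWith K (M t *ᵥ ·) univ :=
    fun t ht => (hK t ht).lipschitzOnWith
  have hfc : ContinuousOn f (Icc a b) := fun t ht => (hf t ht).continuousWithinAt
  have hgc : ContinuousOn g (Icc a b) := fun t ht => (hg t ht).continuousWithinAt
  rw [← Icc_union_Icc_eq_Icc ht₀.1 ht₀.2]
  refine EqOn.union ?_ ?_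
  · have hsub : Ioc a t₀ ⊆ Ioc a b := Ioc_subset_Ioc_right ht₀.2
    have hnhds : ∀ t ∈ Ioc a t₀, Icc a b ∈ 𝓝[≤] t :=
      fun t ht => Icc_mem_nhdsLE_of_mem (hsub ht)
    exact ODE_solution_unique_of_mem_Icc_left (s := fun _ => univ)
      (fun t ht => hlip t (Ioc_subset_Icc_self (hsub ht)))
      (hfc.mono (Icc_subset_Icc_right ht₀.2))
      (fun t ht => (hf t (Ioc_subset_Icc_self (hsub ht))).mono_of_mem_nhdsWithin (hnhds t ht))
      (fun _ _ => mem_univ _) (hgc.mono (Icc_subset_Icc_right ht₀.2))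
      (fun t ht => (hg t (Ioc_subset_Icc_self (hsub ht))).mono_of_mem_nhdsWithin (hnhds t ht))
      (fun _ _ => mem_univ _) hfg
  · have hsub : Ico t₀ b ⊆ Ico a b := Ico_subset_Ico_left ht₀.1
    have hnhds : ∀ t ∈ Ico t₀ b, Icc a b ∈ 𝓝[≥] t :=
      fun t ht => Icc_mem_nhdsGE_of_mem (hsub ht)
    exact ODE_solution_unique_of_mem_Icc_right (s := fun _ => univ)
      (fun t ht => hlip t (Ico_subset_Icc_self (hsub ht)))
      (hfc.mono (Icc_subset_Icc_left ht₀.1))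
      (fun t ht => (hf t (Ico_subset_Icc_self (hsub ht))).mono_of_mem_nhdsWithin (hnhds t ht))
      (fun _ _ => mem_univ _) (hgc.mono (Icc_subset_Icc_left ht₀.1))
      (fun t ht => (hg t (Ico_subset_Icc_self (hsub ht))).mono_of_mem_nhdsWithin (hnhds t ht))
      (fun _ _ => mem_univ _) hfg

variable {Θ : ℝ → Matrix ι ι ℝ}

theorem IsMatrixSolutionOn.hasDerivWithinAt_mulVec
    (hΘ : IsMatrixSolutionOn M Θ (Icc a b))
    {c : ℝ → ι → ℝ} {c' : ι → ℝ} {t : ℝ} (ht : t ∈ Icc a b)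
    (hc : HasDerivWithinAt c c' (Icc a b) t) :
    HasDerivWithinAt (fun s => Θ s *ᵥ c s) (M t *ᵥ (Θ t *ᵥ c t) + Θ t *ᵥ c') (Icc a b) t := by
  simpa only [mulVec_mulVec] using hasDerivWithinAt_matrix_mulVec (hΘ t ht) hc

theorem IsMatrixSolutionOn.hasDerivWithinAt_mulVec_add
    (hΘ : IsMatrixSolutionOn M Θ (Icc a b))
    {Δ p : ℝ → ι → ℝ}
    (hp : ∀ t ∈ Icc a b, HasDerivWithinAt p (M t *ᵥ p t + Δ t) (Icc a b) t)
    (z : ι → ℝ) {t : ℝ} (ht : t ∈ Icc a b) :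
    HasDerivWithinAt (fun s => Θ s *ᵥ z + p s) (M t *ᵥ (Θ t *ᵥ z + p t) + Δ t) (Icc a b) t := by
  have hflow := hΘ.hasDerivWithinAt_mulVec ht (hasDerivWithinAt_const t _ z)
  simpa only [mulVec_zero, add_zero, mulVec_add, add_assoc] using hflow.fun_add (hp t ht)

variable [DecidableEq ι]

theorem IsMatrixSolutionOn.det_ne_zero (hΘ : IsMatrixSolutionOn M Θ (Icc a b)) (hΘa : Θ a = 1)
    (hM : ContinuousOn M (Icc a b))
    {t : ℝ} (ht : t ∈ Icc a b) : (Θ t).det ≠ 0 := by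
  intro hdet
  obtain ⟨z, hz, hΘz⟩ := exists_mulVec_eq_zero_iff.2 hdet
  have hflow : ∀ s ∈ Icc a b,
      HasDerivWithinAt (fun s => Θ s *ᵥ z) (M s *ᵥ (Θ s *ᵥ z)) (Icc a b) s := fun s hs => by
    simpa using hΘ.hasDerivWithinAt_mulVec hs (hasDerivWithinAt_const s _ z)
  have hzero : ∀ s ∈ Icc a b, HasDerivWithinAt (fun _ => 0) (M s *ᵥ 0) (Icc a b) s :=
    fun s _ => by simpa using hasDerivWithinAt_const s _ (0 : ι → ℝ)
  have hza := eqOn_of_hasDerivWithinAt_mulVec hM hflow hzero ht hΘz ⟨le_rfl, ht.1.trans ht.2⟩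
  exact hz (by simpa [hΘa] using hza)

theorem IsMatrixSolutionOn.exists_particular_solution (hΘ : IsMatrixSolutionOn M Θ (Icc a b))
    (hΘa : Θ a = 1) (hM : ContinuousOn M (Icc a b))
    {Δ : ℝ → ι → ℝ} (hΔ : ContinuousOn Δ (Icc a b)) :
    ∃ p : ℝ → ι → ℝ, p a = 0 ∧
      ∀ t ∈ Icc a b, HasDerivWithinAt p (M t *ᵥ p t + Δ t) (Icc a b) t := by
  have hdet t (ht : t ∈ Icc a b) := hΘ.det_ne_zero hΘa hM ht
  have hΘc : ContinuousOn Θ (Icc a b) :=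
    continuousOn_pi.2 fun i => continuousOn_pi.2 fun j t ht => (hΘ t ht i j).continuousWithinAt
  set H : ℝ → ι → ℝ := fun s => (Θ s)⁻¹ *ᵥ Δ s
  have hΘinv : ContinuousOn (fun s => (Θ s)⁻¹) (Icc a b) := fun t ht =>
    (continuousAt_matrix_inv _ (NormedRing.inverse_continuousAt
      (Units.mk0 _ (hdet t ht)))).comp_continuousWithinAt (hΘc t ht)
  have hH : ContinuousOn H (Icc a b) := continuousOn_iff_continuous_domRestrict.2 <|
    (continuousOn_iff_continuous_domRestrict.1 hΘinv).matrix_mulVec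
      (continuousOn_iff_continuous_domRestrict.1 hΔ)
  have hΘH : ∀ t ∈ Icc a b, Θ t *ᵥ H t = Δ t := fun t ht => by
    rw [mulVec_mulVec, mul_nonsing_inv _ (hdet t ht).isUnit, one_mulVec]
  refine ⟨fun t => Θ t *ᵥ ∫ s in a..t, H s, by simp, fun t ht => ?_⟩
  have : Fact (t ∈ Icc a b) := ⟨ht⟩
  have hint : HasDerivWithinAt (fun t => ∫ s in a..t, H s) (H t) (Icc a b) t :=
    intervalIntegral.integral_hasDerivWithinAt_right
      (hH.mono (uIcc_subset_Icc ⟨le_rfl, ht.1.trans ht.2⟩ ht)).intervalIntegrable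
      (hH.stronglyMeasurableAtFilter_nhdsWithin measurableSet_Icc t) (hH t ht)
  simpa only [hΘH t ht] using hΘ.hasDerivWithinAt_mulVec ht hint

theorem IsMatrixSolutionOn.eqOn_mulVec_add (hΘ : IsMatrixSolutionOn M Θ (Icc a b))
    (hΘa : Θ a = 1) (hM : ContinuousOn M (Icc a b)) (hab : a ≤ b)
    {Δ p w : ℝ → ι → ℝ}
    (hp : ∀ t ∈ Icc a b, HasDerivWithinAt p (M t *ᵥ p t + Δ t) (Icc a b) t)
    (hw : ∀ t ∈ Icc a b, HasDerivWithinAt w (M t *ᵥ w t + Δ t) (Icc a b) t) :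
    EqOn w (fun t => Θ t *ᵥ (w a - p a) + p t) (Icc a b) := by
  have hdiff : ∀ t ∈ Icc a b,
      HasDerivWithinAt (fun s => w s - p s) (M t *ᵥ (w t - p t)) (Icc a b) t := fun t ht => by
    simpa only [mulVec_sub, add_sub_add_right_eq_sub] using (hw t ht).fun_sub (hp t ht)
  have hflow : ∀ t ∈ Icc a b, HasDerivWithinAt (fun s => Θ s *ᵥ (w a - p a))
      (M t *ᵥ (Θ t *ᵥ (w a - p a))) (Icc a b) t := fun t ht => by
    simpa using hΘ.hasDerivWithinAt_mulVec ht (hasDerivWithinAt_const t _ (w a - p a))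
  have heq := eqOn_of_hasDerivWithinAt_mulVec hM hdiff hflow ⟨le_rfl, hab⟩ (by simp [hΘa])
  intro t ht
  simp only [← heq ht, sub_add_cancel]

end LinearODE

/-- Proposition 3.1: solvability of the mixed (forward–backward) boundary
value problem `v' = M v + Δ`, `v₁(0) = ξ`, `v₂(0) = ξ₀`, `v₃(T) = 0`,
under the nondegeneracy Assumption 3.4 that the `(3,3)` entry of `Θ T`
is nonzero, where `Θ` is the fundamental solution matrix of `Θ' = M Θ`. -/
theorem mixed_bvp_exists_unique
    (T : ℝ) (hT : 0 < T)
    (M : ℝ → Matrix (Fin 3) (Fin 3) ℝ) (hM : ContinuousOn M (Icc 0 T))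
    (Δ : ℝ → Fin 3 → ℝ) (hΔ : ContinuousOn Δ (Icc 0 T))
    (Θ : ℝ → Matrix (Fin 3) (Fin 3) ℝ)
    (hΘ0 : Θ 0 = 1)
    (hΘ : ∀ t ∈ Icc (0 : ℝ) T, ∀ i j,
      HasDerivWithinAt (fun s => Θ s i j) ((M t * Θ t) i j) (Icc 0 T) t)
    (h33 : Θ T 2 2 ≠ 0)
    (ξ ξ₀ : ℝ) :
    ∃ v : ℝ → Fin 3 → ℝ,
      ((∀ t ∈ Icc (0 : ℝ) T,
          HasDerivWithinAt v (M t *ᵥ v t + Δ t) (Icc 0 T) t) ∧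
        v 0 0 = ξ ∧ v 0 1 = ξ₀ ∧ v T 2 = 0) ∧
      ∀ w : ℝ → Fin 3 → ℝ,
        ((∀ t ∈ Icc (0 : ℝ) T,
            HasDerivWithinAt w (M t *ᵥ w t + Δ t) (Icc 0 T) t) ∧
          w 0 0 = ξ ∧ w 0 1 = ξ₀ ∧ w T 2 = 0) →
        EqOn w v (Icc 0 T) := by
  replace hΘ : IsMatrixSolutionOn M Θ (Icc 0 T) := hΘ
  obtain ⟨p, hp0, hp⟩ := hΘ.exists_particular_solution hΘ0 hM hΔ
  have hthird (z : Fin 3 → ℝ) :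
      (Θ T *ᵥ z) 2 = Θ T 2 0 * z 0 + Θ T 2 1 * z 1 + Θ T 2 2 * z 2 := by
    simp [mulVec, dotProduct, Fin.sum_univ_three]
  set γ := -(Θ T 2 0 * ξ + Θ T 2 1 * ξ₀ + p T 2) / Θ T 2 2
  have hγ : Θ T 2 0 * ξ + Θ T 2 1 * ξ₀ + Θ T 2 2 * γ + p T 2 = 0 := by
    simp only [γ]
    field_simp
    ring
  refine ⟨fun t => Θ t *ᵥ ![ξ, ξ₀, γ] + p t,
    ⟨fun t ht => hΘ.hasDerivWithinAt_mulVec_add hp _ ht,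
      by simp [hΘ0, hp0], by simp [hΘ0, hp0], by simpa [hthird] using hγ⟩, ?_⟩
  rintro w ⟨hw, hw0, hw1, hwT⟩
  have hrepr := hΘ.eqOn_mulVec_add hΘ0 hM hT.le hp hw
  simp only [hp0, sub_zero] at hrepr
  suffices hinit : w 0 = ![ξ, ξ₀, γ] by rwa [hinit] at hrepr
  have hwT' : (Θ T *ᵥ w 0) 2 + p T 2 = 0 :=
    (congrFun (hrepr ⟨hT.le, le_rfl⟩) 2).symm.trans hwT
  rw [hthird, hw0, hw1] at hwT'
  have hw2 : w 0 2 = γ := mul_left_cancel₀ h33 (by linarith)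
  ext i
  fin_cases i <;> simp [hw0, hw1, hw2]
end

section
/- (Well-posedness of the Riccati equation (3.10).) Let T > 0 and let A₁, B₁, C₁, C̃₁, D₁, D̃₁, Q₁, R₁ : [0,T] → ℝ be continuous functions such that Q₁(t) ≥ 0 for all t, and there is a constant δ > 0 with R₁(t) ≥ δ for all t; let G₁ ≥ 0 be a real constant. Then there exists a unique differentiable function P₁ : [0,T] → ℝ such that R₁(t) + (D₁(t)² + D̃₁(t)²) P₁(t) > 0 for all t ∈ [0,T], P₁(T) = G₁, and for all t ∈ [0,T]: P₁'(t) + (2A₁(t) + C₁(t)² + C̃₁(t)²) P₁(t) − (B₁(t) + C₁(t)D₁(t) + C̃₁(t)D̃₁(t))² P₁(t)² / (R₁(t) + (D₁(t)² + D̃₁(t)²) P₁(t)) + Q₁(t) = 0. Moreover, this solution satisfies P₁(t) ≥ 0 for every t ∈ [0,T], and hence R₁(t) + (D₁(t)² + D̃₁(t)²) P₁(t) ≥ δ for every t ∈ [0,T]. -/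
/-!
Clamping the state into `[0, M]` turns the Riccati nonlinearity into a bounded, globally
Lipschitz field, so Picard–Lindelöf gives a solution on the whole of `[0, T]`. Comparison
arguments run backward from the terminal time keep this solution inside `[0, M]`: it stays
nonnegative because the field at `0` is `Q ≥ 0`, and it stays below an exponential barrier
because on `[0, M]` the field grows at most linearly (the quadratic term has a favourable sign).
Hence it solves the untruncated equation, with denominator at least `δ`. Uniqueness holds
because any two solutions live, with denominators bounded away from `0`, in a compact region
where the field is Lipschitz.
-/

open Set
open scoped NNReal

theorem image_le_of_deriv_left_gt_deriv_boundary {f f' B B' : ℝ → ℝ} {a b : ℝ}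
    (hf : ∀ x ∈ Icc a b, HasDerivWithinAt f (f' x) (Icc a b) x)
    (hB : ∀ x, HasDerivAt B (B' x) x) (hb : f b ≤ B b)
    (bound : ∀ x ∈ Ioc a b, f x = B x → B' x < f' x) :
    ∀ x ∈ Icc a b, f x ≤ B x := by
  have hneg : MapsTo (fun s : ℝ => -s) (Icc (-b) (-a)) (Icc a b) :=
    fun s hs => ⟨le_neg.mp hs.2, neg_le.mp hs.1⟩
  have hcont : ContinuousOn f (Icc a b) := fun x hx => (hf x hx).continuousWithinAt
  have key := image_le_of_deriv_right_lt_deriv_boundary (a := -b) (b := -a)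
    (f := fun s => f (-s)) (f' := fun s => -f' (-s)) (B := fun s => B (-s))
    (B' := fun s => -B' (-s)) (hcont.comp continuousOn_neg hneg)
    (fun s hs => by
      have h := (hf (-s) (hneg (Ico_subset_Icc_self hs))).comp s
        (hasDerivAt_neg s).hasDerivWithinAt hneg
      simpa [Function.comp_def] using h.mono_of_mem_nhdsWithin (Icc_mem_nhdsGE_of_mem hs))
    (by simpa using hb)
    (fun s => by simpa [Function.comp_def] using (hB (-s)).comp s (hasDerivAt_neg s))
    (fun s hs hfB => neg_lt_neg (bound (-s) ⟨lt_neg.mp hs.2, neg_le.mp hs.1⟩ hfB))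
  intro x hx
  simpa using key (x := -x) ⟨neg_le_neg hx.2, neg_le_neg hx.1⟩

theorem nonneg_of_deriv_left_nonpos_of_neg {f f' : ℝ → ℝ} {a b : ℝ}
    (hf : ∀ x ∈ Icc a b, HasDerivWithinAt f (f' x) (Icc a b) x) (hb : 0 ≤ f b)
    (hneg : ∀ x ∈ Ioc a b, f x < 0 → f' x ≤ 0) :
    ∀ x ∈ Icc a b, 0 ≤ f x := by
  -- Compare `-f` with the strict barriers `ε (b + 1 - x)` and let `ε → 0`.
  have barrier : ∀ ε > 0, ∀ x ∈ Icc a b, -f x ≤ ε * (b + 1 - x) := by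
    intro ε hε
    refine image_le_of_deriv_left_gt_deriv_boundary (f' := fun x => -f' x) (B' := fun _ => -ε)
      (fun x hx => (hf x hx).neg) (fun x => ?_) (by linarith) ?_
    · simpa using ((hasDerivAt_id x).const_sub (b + 1)).const_mul ε
    · intro x hx hfB
      have hfx : f x < 0 := by nlinarith [hx.2]
      linarith [hneg x hx hfx]
  intro x hx
  have hpos : 0 < b + 1 - x := by linarith [hx.2]
  refine neg_nonpos.mp (le_of_forall_pos_le_add fun ε hε => ?_)
  have := barrier (ε / (b + 1 - x)) (by positivity) x hx
  simpa [div_mul_cancel₀ _ hpos.ne'] using this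

theorem exists_forall_mem_Icc_hasDerivWithinAt_of_lipschitzWith {E : Type*}
    [NormedAddCommGroup E] [NormedSpace ℝ E] [CompleteSpace E] {f : ℝ → E → E}
    {tmin tmax : ℝ} (t₀ : Icc tmin tmax) (x₀ : E) {K C : ℝ≥0}
    (hlip : ∀ t ∈ Icc tmin tmax, LipschitzWith K (f t))
    (hcont : ∀ x, ContinuousOn (f · x) (Icc tmin tmax))
    (hbound : ∀ t ∈ Icc tmin tmax, ∀ x, ‖f t x‖ ≤ C) :
    ∃ α : ℝ → E, α t₀ = x₀ ∧
      ∀ t ∈ Icc tmin tmax, HasDerivWithinAt α (f t (α t)) (Icc tmin tmax) t := by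
  set τ : ℝ≥0 := ⟨max (tmax - t₀) (t₀ - tmin), le_max_of_le_left (sub_nonneg.2 t₀.2.2)⟩
  have hpl : IsPicardLindelof f t₀ x₀ (C * τ) 0 C K :=
    { lipschitzOnWith := fun t ht => (hlip t ht).lipschitzOnWith
      continuousOn := fun x _ => hcont x
      norm_le := fun t ht x _ => hbound t ht x
      mul_max_le := by rw [NNReal.coe_zero, sub_zero, NNReal.coe_mul]; rfl }
  exact hpl.exists_eq_forall_mem_Icc_hasDerivWithinAt₀

-- `P' = -riccatiField a k r d q t P` is the Riccati equation (3.10) with `a = 2A₁ + C₁² + C̃₁²`,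
-- `k = (B₁ + C₁D₁ + C̃₁D̃₁)²`, `r = R₁`, `d = D₁² + D̃₁²` and `q = Q₁`.
noncomputable def riccatiField (a k r d q : ℝ → ℝ) (t x : ℝ) : ℝ :=
  a t * x - k t * x ^ 2 / (r t + d t * x) + q t

def IsRiccatiSolution (a k r d q : ℝ → ℝ) (T G : ℝ) (P : ℝ → ℝ) : Prop :=
  (∀ t ∈ Icc 0 T, 0 < r t + d t * P t) ∧ P T = G ∧
    ∀ t ∈ Icc 0 T, HasDerivWithinAt P (-riccatiField a k r d q t (P t)) (Icc 0 T) t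

section Field

variable {a k r d q : ℝ → ℝ} {t x : ℝ}

@[simp]
theorem riccatiField_zero : riccatiField a k r d q t 0 = q t := by
  simp [riccatiField]

theorem riccatiField_le (hk : 0 ≤ k t) (hden : 0 ≤ r t + d t * x) :
    riccatiField a k r d q t x ≤ a t * x + q t := by
  have : 0 ≤ k t * x ^ 2 / (r t + d t * x) := by positivity
  unfold riccatiField
  linarith

theorem abs_riccatiField_le {La Lk Lq M e : ℝ} (he : 0 < e) (hx : |x| ≤ M)
    (hden : e ≤ r t + d t * x) (ha : |a t| ≤ La) (hk : |k t| ≤ Lk) (hq : |q t| ≤ Lq) :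
    |riccatiField a k r d q t x| ≤ La * M + Lk * M ^ 2 / e + Lq := by
  have hLk : 0 ≤ Lk := (abs_nonneg _).trans hk
  have hquad : |k t * x ^ 2 / (r t + d t * x)| ≤ Lk * M ^ 2 / e := by
    rw [abs_div, abs_mul, abs_of_pos (he.trans_le hden), abs_pow]
    gcongr
  calc |riccatiField a k r d q t x|
      ≤ |a t| * |x| + |k t * x ^ 2 / (r t + d t * x)| + |q t| := by
        rw [← abs_mul]; exact (abs_add_le _ _).trans (by gcongr; exact abs_sub _ _)
    _ ≤ La * M + Lk * M ^ 2 / e + Lq := by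
        gcongr
        exact (abs_nonneg _).trans ha

theorem lipschitzOnWith_riccatiField {La Lk Lr Ld M e : ℝ} (he : 0 < e) (ha : |a t| ≤ La)
    (hk : |k t| ≤ Lk) (hr : |r t| ≤ Lr) (hd : |d t| ≤ Ld) :
    LipschitzOnWith (La + Lk * (2 * Lr * M + Ld * M ^ 2) / e ^ 2).toNNReal
      (riccatiField a k r d q t) {x | |x| ≤ M ∧ e ≤ r t + d t * x} := by
  refine LipschitzOnWith.of_dist_le' fun x ⟨hxM, hx⟩ y ⟨hyM, hy⟩ => ?_
  have hLk : 0 ≤ Lk := (abs_nonneg _).trans hk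
  have hLr : 0 ≤ Lr := (abs_nonneg _).trans hr
  have hLd : 0 ≤ Ld := (abs_nonneg _).trans hd
  have hM : 0 ≤ M := (abs_nonneg _).trans hxM
  have hDx : 0 < r t + d t * x := he.trans_le hx
  have hDy : 0 < r t + d t * y := he.trans_le hy
  set S := k t * (r t * (x + y) + d t * (x * y)) / ((r t + d t * x) * (r t + d t * y))
  have hdiff : riccatiField a k r d q t x - riccatiField a k r d q t y = (a t - S) * (x - y) := by
    have hquad : k t * x ^ 2 / (r t + d t * x) - k t * y ^ 2 / (r t + d t * y) = S * (x - y) := by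
      rw [div_sub_div _ _ hDx.ne' hDy.ne', div_mul_eq_mul_div]
      congr 1
      ring
    simp only [riccatiField]
    linear_combination -hquad
  have hnum : |r t * (x + y) + d t * (x * y)| ≤ 2 * Lr * M + Ld * M ^ 2 := by
    calc |r t * (x + y) + d t * (x * y)| ≤ |r t| * (|x| + |y|) + |d t| * (|x| * |y|) := by
          refine (abs_add_le _ _).trans ?_
          rw [abs_mul, abs_mul, abs_mul]
          gcongr
          exact abs_add_le _ _
      _ ≤ Lr * (M + M) + Ld * (M * M) := by gcongr
      _ = 2 * Lr * M + Ld * M ^ 2 := by ring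
  have hS : |S| ≤ Lk * (2 * Lr * M + Ld * M ^ 2) / e ^ 2 := by
    rw [abs_div, abs_mul, abs_of_pos (mul_pos hDx hDy)]
    refine div_le_div₀ (by positivity) (mul_le_mul hk hnum (abs_nonneg _) hLk) (by positivity) ?_
    rw [sq]
    exact mul_le_mul hx hy he.le hDx.le
  rw [Real.dist_eq, Real.dist_eq, hdiff, abs_mul]
  gcongr
  exact (abs_sub _ _).trans (add_le_add ha hS)

theorem continuousOn_riccatiField {s : Set ℝ} (ha : ContinuousOn a s) (hk : ContinuousOn k s)
    (hr : ContinuousOn r s) (hd : ContinuousOn d s) (hq : ContinuousOn q s)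
    (hden : ∀ t ∈ s, r t + d t * x ≠ 0) :
    ContinuousOn (riccatiField a k r d q · x) s := by
  unfold riccatiField
  exact ((ha.mul continuousOn_const).sub ((hk.mul continuousOn_const).div
    (hr.add (hd.mul continuousOn_const)) hden)).add hq

end Field

section Uniform

variable {a k r d q : ℝ → ℝ} {s : Set ℝ}

theorem exists_lipschitzOnWith_riccatiField (hs : IsCompact s) (ha : ContinuousOn a s)
    (hk : ContinuousOn k s) (hr : ContinuousOn r s) (hd : ContinuousOn d s) (M : ℝ) {e : ℝ}
    (he : 0 < e) :
    ∃ K, ∀ t ∈ s, LipschitzOnWith K (riccatiField a k r d q t)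
      {x | |x| ≤ M ∧ e ≤ r t + d t * x} := by
  obtain ⟨La, hLa⟩ := hs.exists_bound_of_continuousOn ha
  obtain ⟨Lk, hLk⟩ := hs.exists_bound_of_continuousOn hk
  obtain ⟨Lr, hLr⟩ := hs.exists_bound_of_continuousOn hr
  obtain ⟨Ld, hLd⟩ := hs.exists_bound_of_continuousOn hd
  exact ⟨_, fun t ht => lipschitzOnWith_riccatiField he (hLa t ht) (hLk t ht) (hLr t ht) (hLd t ht)⟩

theorem exists_abs_riccatiField_le (hs : IsCompact s) (ha : ContinuousOn a s)
    (hk : ContinuousOn k s) (hq : ContinuousOn q s) (M : ℝ) {e : ℝ} (he : 0 < e) :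
    ∃ C, ∀ t ∈ s, ∀ x, |x| ≤ M → e ≤ r t + d t * x → |riccatiField a k r d q t x| ≤ C := by
  obtain ⟨La, hLa⟩ := hs.exists_bound_of_continuousOn ha
  obtain ⟨Lk, hLk⟩ := hs.exists_bound_of_continuousOn hk
  obtain ⟨Lq, hLq⟩ := hs.exists_bound_of_continuousOn hq
  exact ⟨_, fun t ht x hx hden => abs_riccatiField_le he hx hden (hLa t ht) (hLk t ht) (hLq t ht)⟩

end Uniform

section Truncated

variable {a k r d q : ℝ → ℝ} {T δ M : ℝ}

theorem exists_hasDerivWithinAt_riccatiField_projIcc (hT : 0 ≤ T)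
    (ha : ContinuousOn a (Icc 0 T)) (hk : ContinuousOn k (Icc 0 T))
    (hr : ContinuousOn r (Icc 0 T)) (hd : ContinuousOn d (Icc 0 T))
    (hq : ContinuousOn q (Icc 0 T)) (hd0 : ∀ t ∈ Icc 0 T, 0 ≤ d t) (hδ : 0 < δ)
    (hrδ : ∀ t ∈ Icc 0 T, δ ≤ r t) (hM : 0 ≤ M) (G : ℝ) :
    ∃ p : ℝ → ℝ, p T = G ∧ ∀ t ∈ Icc 0 T,
      HasDerivWithinAt p (-riccatiField a k r d q t (projIcc 0 M hM (p t))) (Icc 0 T) t := by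
  have hmem : ∀ t ∈ Icc 0 T, ∀ y,
      (projIcc 0 M hM y : ℝ) ∈ {x | |x| ≤ M ∧ δ ≤ r t + d t * x} := by
    intro t ht y
    obtain ⟨hy0, hyM⟩ := (projIcc 0 M hM y).2
    refine ⟨abs_le.2 ⟨by linarith, hyM⟩, ?_⟩
    nlinarith [hrδ t ht, mul_nonneg (hd0 t ht) hy0]
  obtain ⟨K, hK⟩ := exists_lipschitzOnWith_riccatiField (q := q) isCompact_Icc ha hk hr hd M hδ
  obtain ⟨C, hC⟩ := exists_abs_riccatiField_le (r := r) (d := d) isCompact_Icc ha hk hq M hδ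
  refine exists_forall_mem_Icc_hasDerivWithinAt_of_lipschitzWith ⟨T, right_mem_Icc.2 hT⟩ G
    (f := fun t x => -riccatiField a k r d q t (projIcc 0 M hM x)) (K := K * 1)
    (C := C.toNNReal) (fun t ht => ?_) (fun x => ?_) (fun t ht x => ?_)
  · have hclamp : LipschitzWith 1 (Subtype.val ∘ projIcc 0 M hM) := by
      simpa using (LipschitzWith.subtype_val (Icc 0 M)).comp (LipschitzWith.projIcc hM)
    rw [← lipschitzOnWith_univ]
    exact ((hK t ht).comp hclamp.lipschitzOnWith fun y _ => hmem t ht y).neg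
  · refine (continuousOn_riccatiField ha hk hr hd hq fun t ht => ?_).neg
    exact (hδ.trans_le (hmem t ht x).2).ne'
  · rw [norm_neg]
    exact (hC t ht _ (hmem t ht x).1 (hmem t ht x).2).trans (Real.le_coe_toNNReal C)

variable {F : ℝ → ℝ → ℝ} {p : ℝ → ℝ} {hM : 0 ≤ M}

theorem nonneg_of_hasDerivWithinAt_comp_projIcc
    (hp : ∀ t ∈ Icc 0 T, HasDerivWithinAt p (-F t (projIcc 0 M hM (p t))) (Icc 0 T) t)
    (hpT : 0 ≤ p T) (hF : ∀ t ∈ Icc 0 T, 0 ≤ F t 0) :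
    ∀ t ∈ Icc 0 T, 0 ≤ p t := by
  refine nonneg_of_deriv_left_nonpos_of_neg hp hpT fun t ht hpt => ?_
  rw [projIcc_of_le_left hM hpt.le, neg_nonpos]
  exact hF t (Ioc_subset_Icc_self ht)

-- The barrier `(G + 1) e^{2λ(T - t)} - 1` solves `B' = -2λ (B + 1)`, which is strictly below
-- `-F t B` as long as `B ∈ [0, M]`.
theorem le_of_hasDerivWithinAt_comp_projIcc {G lam : ℝ}
    (hp : ∀ t ∈ Icc 0 T, HasDerivWithinAt p (-F t (projIcc 0 M hM (p t))) (Icc 0 T) t)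
    (hpT : p T ≤ G) (hG : 0 ≤ G) (hlam : 0 < lam)
    (hMG : (G + 1) * Real.exp (2 * lam * T) - 1 ≤ M)
    (hF : ∀ t ∈ Icc 0 T, ∀ x ∈ Icc 0 M, F t x ≤ lam * (x + 1)) :
    ∀ t ∈ Icc 0 T, p t ≤ M := by
  set B : ℝ → ℝ := fun t => (G + 1) * Real.exp (2 * lam * (T - t)) - 1 with hB
  have hGB : ∀ t ∈ Icc 0 T, G ≤ B t := by
    intro t ht
    have : 1 ≤ Real.exp (2 * lam * (T - t)) := Real.one_le_exp (by nlinarith [ht.2])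
    simp only [hB]; nlinarith
  have hBM : ∀ t ∈ Icc 0 T, B t ≤ M := by
    intro t ht
    have : Real.exp (2 * lam * (T - t)) ≤ Real.exp (2 * lam * T) :=
      Real.exp_le_exp.2 (by nlinarith [ht.1])
    simp only [hB]; nlinarith
  have hBderiv : ∀ t, HasDerivAt B (-(2 * lam) * (B t + 1)) t := by
    intro t
    refine ((((hasDerivAt_id t).const_sub T).const_mul (2 * lam)).exp.const_mul
      (G + 1)).sub_const 1 |>.congr_deriv ?_
    simp only [hB, id]
    ring
  intro t ht
  refine (image_le_of_deriv_left_gt_deriv_boundary hp hBderiv (by simpa [hB] using hpT)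
    (fun t ht hpB => ?_) t ht).trans (hBM t ht)
  have ht' := Ioc_subset_Icc_self ht
  have hBt : B t ∈ Icc 0 M := ⟨hG.trans (hGB t ht'), hBM t ht'⟩
  rw [hpB, projIcc_of_mem hM hBt, Subtype.coe_mk]
  nlinarith [hF t ht' (B t) hBt, mul_pos hlam (by linarith [hBt.1] : 0 < B t + 1)]

end Truncated

section Solution

variable {a k r d q : ℝ → ℝ} {T G δ : ℝ}

theorem exists_isRiccatiSolution_nonneg (hT : 0 ≤ T)
    (ha : ContinuousOn a (Icc 0 T)) (hk : ContinuousOn k (Icc 0 T))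
    (hr : ContinuousOn r (Icc 0 T)) (hd : ContinuousOn d (Icc 0 T))
    (hq : ContinuousOn q (Icc 0 T)) (hk0 : ∀ t ∈ Icc 0 T, 0 ≤ k t)
    (hd0 : ∀ t ∈ Icc 0 T, 0 ≤ d t) (hq0 : ∀ t ∈ Icc 0 T, 0 ≤ q t) (hδ : 0 < δ)
    (hrδ : ∀ t ∈ Icc 0 T, δ ≤ r t) (hG : 0 ≤ G) :
    ∃ P, IsRiccatiSolution a k r d q T G P ∧ ∀ t ∈ Icc 0 T, 0 ≤ P t := by
  obtain ⟨Ca, hCa⟩ := isCompact_Icc.exists_bound_of_continuousOn ha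
  obtain ⟨Cq, hCq⟩ := isCompact_Icc.exists_bound_of_continuousOn hq
  set lam := |Ca| + |Cq| + 1
  set M := (G + 1) * Real.exp (2 * lam * T) - 1
  have hM : 0 ≤ M := by
    have : 1 ≤ Real.exp (2 * lam * T) := Real.one_le_exp (by positivity)
    nlinarith
  have hden : ∀ t ∈ Icc 0 T, ∀ x, 0 ≤ x → δ ≤ r t + d t * x := fun t ht x hx => by
    nlinarith [hrδ t ht, mul_nonneg (hd0 t ht) hx]
  have hF : ∀ t ∈ Icc 0 T, ∀ x ∈ Icc 0 M, riccatiField a k r d q t x ≤ lam * (x + 1) := by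
    intro t ht x hx
    have hat : a t ≤ lam := by
      have : |a t| ≤ Ca := hCa t ht
      linarith [le_abs_self (a t), le_abs_self Ca, abs_nonneg Cq]
    have hqt : q t ≤ lam := by
      have : |q t| ≤ Cq := hCq t ht
      linarith [le_abs_self (q t), le_abs_self Cq, abs_nonneg Ca]
    have := riccatiField_le (a := a) (q := q) (hk0 t ht) (hδ.le.trans (hden t ht x hx.1))
    nlinarith [mul_le_mul_of_nonneg_right hat hx.1]
  obtain ⟨p, hpT, hp⟩ :=
    exists_hasDerivWithinAt_riccatiField_projIcc hT ha hk hr hd hq hd0 hδ hrδ hM G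
  have hp0 := nonneg_of_hasDerivWithinAt_comp_projIcc hp (hpT ▸ hG)
    fun t ht => by simpa using hq0 t ht
  have hpM := le_of_hasDerivWithinAt_comp_projIcc hp hpT.le hG (by positivity) le_rfl hF
  refine ⟨p, ⟨fun t ht => hδ.trans_le (hden t ht _ (hp0 t ht)), hpT, fun t ht => ?_⟩, hp0⟩
  simpa [projIcc_of_mem hM ⟨hp0 t ht, hpM t ht⟩] using hp t ht

theorem IsRiccatiSolution.exists_bound (hr : ContinuousOn r (Icc 0 T))
    (hd : ContinuousOn d (Icc 0 T)) {P : ℝ → ℝ} (hP : IsRiccatiSolution a k r d q T G P) :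
    ∃ M, ∃ e > 0, ∀ t ∈ Icc 0 T, |P t| ≤ M ∧ e ≤ r t + d t * P t := by
  have hPc : ContinuousOn P (Icc 0 T) := fun t ht => (hP.2.2 t ht).continuousWithinAt
  obtain ⟨M, hM⟩ := isCompact_Icc.exists_bound_of_continuousOn hPc
  obtain ⟨e, he, hde⟩ := isCompact_Icc.exists_forall_le' (hr.add (hd.mul hPc)) hP.1
  exact ⟨M, e, he, fun t ht => ⟨hM t ht, hde t ht⟩⟩

theorem IsRiccatiSolution.eqOn (ha : ContinuousOn a (Icc 0 T)) (hk : ContinuousOn k (Icc 0 T))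
    (hr : ContinuousOn r (Icc 0 T)) (hd : ContinuousOn d (Icc 0 T)) {P₁ P₂ : ℝ → ℝ}
    (h₁ : IsRiccatiSolution a k r d q T G P₁) (h₂ : IsRiccatiSolution a k r d q T G P₂) :
    EqOn P₁ P₂ (Icc 0 T) := by
  obtain ⟨M₁, e₁, he₁, hb₁⟩ := h₁.exists_bound hr hd
  obtain ⟨M₂, e₂, he₂, hb₂⟩ := h₂.exists_bound hr hd
  obtain ⟨K, hK⟩ := exists_lipschitzOnWith_riccatiField (q := q) isCompact_Icc ha hk hr hd
    (max M₁ M₂) (lt_min he₁ he₂)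
  have hleft : ∀ {P : ℝ → ℝ}, IsRiccatiSolution a k r d q T G P → ∀ t ∈ Ioc 0 T,
      HasDerivWithinAt P (-riccatiField a k r d q t (P t)) (Iic t) t := fun hP t ht =>
    (hP.2.2 t (Ioc_subset_Icc_self ht)).mono_of_mem_nhdsWithin (Icc_mem_nhdsLE_of_mem ht)
  refine ODE_solution_unique_of_mem_Icc_left (fun t ht => (hK t (Ioc_subset_Icc_self ht)).neg)
    (fun t ht => (h₁.2.2 t ht).continuousWithinAt) (hleft h₁) (fun t ht => ?_)
    (fun t ht => (h₂.2.2 t ht).continuousWithinAt) (hleft h₂) (fun t ht => ?_)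
    (h₁.2.1.trans h₂.2.1.symm)
  · obtain ⟨hM, he⟩ := hb₁ t (Ioc_subset_Icc_self ht)
    exact ⟨hM.trans (le_max_left _ _), (min_le_left _ _).trans he⟩
  · obtain ⟨hM, he⟩ := hb₂ t (Ioc_subset_Icc_self ht)
    exact ⟨hM.trans (le_max_right _ _), (min_le_right _ _).trans he⟩

theorem exists_unique_isRiccatiSolution (hT : 0 ≤ T)
    (ha : ContinuousOn a (Icc 0 T)) (hk : ContinuousOn k (Icc 0 T))
    (hr : ContinuousOn r (Icc 0 T)) (hd : ContinuousOn d (Icc 0 T))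
    (hq : ContinuousOn q (Icc 0 T)) (hk0 : ∀ t ∈ Icc 0 T, 0 ≤ k t)
    (hd0 : ∀ t ∈ Icc 0 T, 0 ≤ d t) (hq0 : ∀ t ∈ Icc 0 T, 0 ≤ q t) (hδ : 0 < δ)
    (hrδ : ∀ t ∈ Icc 0 T, δ ≤ r t) (hG : 0 ≤ G) :
    ∃ P, IsRiccatiSolution a k r d q T G P ∧
      (∀ P', IsRiccatiSolution a k r d q T G P' → EqOn P' P (Icc 0 T)) ∧
      (∀ t ∈ Icc 0 T, 0 ≤ P t) ∧ ∀ t ∈ Icc 0 T, δ ≤ r t + d t * P t := by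
  obtain ⟨P, hP, hP0⟩ :=
    exists_isRiccatiSolution_nonneg hT ha hk hr hd hq hk0 hd0 hq0 hδ hrδ hG
  refine ⟨P, hP, fun P' hP' => hP'.eqOn ha hk hr hd hP, hP0, fun t ht => ?_⟩
  nlinarith [hrδ t ht, mul_nonneg (hd0 t ht) (hP0 t ht)]

end Solution

/-- Well-posedness of the Riccati equation (3.10): under nonnegativity of
`Q₁`, uniform positivity of `R₁` and `G₁ ≥ 0`, the terminal value problem
`P₁' + (2A₁ + C₁² + C̃₁²) P₁ − (B₁ + C₁D₁ + C̃₁D̃₁)² P₁² / (R₁ + (D₁² + D̃₁²) P₁) + Q₁ = 0`,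
`P₁(T) = G₁`, has a unique solution keeping the denominator positive;
moreover the solution is nonnegative and the denominator stays `≥ δ`. -/
theorem riccati_P1_exists_unique
    (T : ℝ) (hT : 0 < T)
    (A₁ B₁ C₁ Ct₁ D₁ Dt₁ Q₁ R₁ : ℝ → ℝ)
    (hA₁ : ContinuousOn A₁ (Icc 0 T)) (hB₁ : ContinuousOn B₁ (Icc 0 T))
    (hC₁ : ContinuousOn C₁ (Icc 0 T)) (hCt₁ : ContinuousOn Ct₁ (Icc 0 T))
    (hD₁ : ContinuousOn D₁ (Icc 0 T)) (hDt₁ : ContinuousOn Dt₁ (Icc 0 T))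
    (hQ₁ : ContinuousOn Q₁ (Icc 0 T)) (hR₁ : ContinuousOn R₁ (Icc 0 T))
    (hQ₁pos : ∀ t ∈ Icc (0 : ℝ) T, 0 ≤ Q₁ t)
    (δ : ℝ) (hδ : 0 < δ)
    (hR₁pos : ∀ t ∈ Icc (0 : ℝ) T, δ ≤ R₁ t)
    (G₁ : ℝ) (hG₁ : 0 ≤ G₁) :
    ∃ P₁ : ℝ → ℝ,
      ((∀ t ∈ Icc (0 : ℝ) T, 0 < R₁ t + ((D₁ t) ^ 2 + (Dt₁ t) ^ 2) * P₁ t) ∧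
        P₁ T = G₁ ∧
        ∀ t ∈ Icc (0 : ℝ) T,
          HasDerivWithinAt P₁
            (-((2 * A₁ t + (C₁ t) ^ 2 + (Ct₁ t) ^ 2) * P₁ t
              - (B₁ t + C₁ t * D₁ t + Ct₁ t * Dt₁ t) ^ 2 * (P₁ t) ^ 2
                / (R₁ t + ((D₁ t) ^ 2 + (Dt₁ t) ^ 2) * P₁ t)
              + Q₁ t)) (Icc 0 T) t) ∧
      (∀ P₁' : ℝ → ℝ,
        ((∀ t ∈ Icc (0 : ℝ) T, 0 < R₁ t + ((D₁ t) ^ 2 + (Dt₁ t) ^ 2) * P₁' t) ∧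
          P₁' T = G₁ ∧
          ∀ t ∈ Icc (0 : ℝ) T,
            HasDerivWithinAt P₁'
              (-((2 * A₁ t + (C₁ t) ^ 2 + (Ct₁ t) ^ 2) * P₁' t
                - (B₁ t + C₁ t * D₁ t + Ct₁ t * Dt₁ t) ^ 2 * (P₁' t) ^ 2
                  / (R₁ t + ((D₁ t) ^ 2 + (Dt₁ t) ^ 2) * P₁' t)
                + Q₁ t)) (Icc 0 T) t) →
        EqOn P₁' P₁ (Icc 0 T)) ∧
      (∀ t ∈ Icc (0 : ℝ) T, 0 ≤ P₁ t) ∧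
      (∀ t ∈ Icc (0 : ℝ) T, δ ≤ R₁ t + ((D₁ t) ^ 2 + (Dt₁ t) ^ 2) * P₁ t) := by
  exact exists_unique_isRiccatiSolution (a := fun t => 2 * A₁ t + C₁ t ^ 2 + Ct₁ t ^ 2)
    (k := fun t => (B₁ t + C₁ t * D₁ t + Ct₁ t * Dt₁ t) ^ 2) (d := fun t => D₁ t ^ 2 + Dt₁ t ^ 2)
    hT.le (by fun_prop) (by fun_prop) hR₁ (by fun_prop) hQ₁ (fun t _ => sq_nonneg _)
    (fun t _ => by positivity) hQ₁pos hδ hR₁pos hG₁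
end
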